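/- Uniqueness of the homography from four correspondences: if M and M' are invertible 3×3 matrices inducing homographies that agree on four points in general position (no three collinear, all in both domains), then M' = λM for some nonzero scalar λ. -/

import Mathlib

/-!
Let `v i` be the homogeneous coordinates of `p i`. Since `M` and `M'` send `v i` to multiples of
the same vector, `v i` is an eigenvector of `M' * M⁻¹` (acting on row vectors) with eigenvalue
`w' i / w i`. Non-collinearity makes every three of the `v i` a basis, so the coordinates of `v 3`
in the basis `v 0, v 1, v 2` are all nonzero; comparing them on both sides of the eigenvector
equation for `v 3` forces the four eigenvalues to coincide, hence `M' * M⁻¹` is scalar.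
-/

open Matrix Module

section

variable {K V ι : Type*} [Field K] [AddCommGroup V] [Module K V]

namespace Module.Basis

theorem repr_ne_zero_of_linearIndependent_update [DecidableEq ι] (b : Basis ι K V) {v : V}
    {i : ι} (h : LinearIndependent K (Function.update b i v)) : b.repr v i ≠ 0 := by
  intro hvi
  have hspan : v ∈ Submodule.span K (b '' {i}ᶜ) := by
    rw [b.mem_span_image]
    rintro j hj rfl
    exact (Finsupp.mem_support_iff.1 hj) hvi
  have himage : Function.update b i v '' {i}ᶜ = b '' {i}ᶜ :=
    Set.image_congr fun j hj => Function.update_of_ne hj _ _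
  have hnot := h.notMem_span_image (s := {i}ᶜ) (x := i) (by simp)
  rw [Function.update_self, himage] at hnot
  exact hnot hspan

theorem repr_apply_eq_mul_of_apply_eq_smul (b : Basis ι K V) {f : V →ₗ[K] V} {μ : ι → K}
    (hf : ∀ j, f (b j) = μ j • b j) (x : V) (i : ι) : b.repr (f x) i = μ i * b.repr x i := by
  have : b.coord i ∘ₗ f = μ i • b.coord i := b.ext fun j => by
    rcases eq_or_ne j i with rfl | hji
    · simp [hf]
    · simp [hf, hji]
  exact LinearMap.congr_fun this x

theorem eq_smul_id_of_eigenvectors [DecidableEq ι] (b : Basis ι K V) {v : V}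
    (hv : ∀ i, LinearIndependent K (Function.update b i v)) {f : V →ₗ[K] V} {μ : ι → K}
    (hf : ∀ i, f (b i) = μ i • b i) {ν : K} (hfv : f v = ν • v) : f = ν • LinearMap.id :=
  b.ext fun i => by
    have h := b.repr_apply_eq_mul_of_apply_eq_smul hf v i
    rw [hfv, map_smul, Finsupp.smul_apply, smul_eq_mul] at h
    rw [hf, mul_right_cancel₀ (b.repr_ne_zero_of_linearIndependent_update (hv i)) h]
    rfl

end Module.Basis

theorem Module.End.eq_smul_id_of_four_eigenvectors (hV : finrank K V = 3) {u : Fin 4 → V}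
    (hu : ∀ i j k, i ≠ j → j ≠ k → i ≠ k → LinearIndependent K ![u i, u j, u k])
    {f : V →ₗ[K] V} {μ : Fin 4 → K} (hf : ∀ i, f (u i) = μ i • u i) :
    f = μ 3 • LinearMap.id := by
  let b := basisOfLinearIndependentOfCardEqFinrank (hu 0 1 2 (by decide) (by decide) (by decide))
    (by simp [hV])
  have hb : ⇑b = ![u 0, u 1, u 2] := coe_basisOfLinearIndependentOfCardEqFinrank _ _
  have hgp : ∀ i, LinearIndependent K (Function.update b i (u 3)) := by
    intro i
    rw [hb]
    fin_cases i
    · convert hu 3 1 2 (by decide) (by decide) (by decide) using 1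
      ext l : 1; fin_cases l <;> rfl
    · convert hu 0 3 2 (by decide) (by decide) (by decide) using 1
      ext l : 1; fin_cases l <;> rfl
    · convert hu 0 1 3 (by decide) (by decide) (by decide) using 1
      ext l : 1; fin_cases l <;> rfl
  exact b.eq_smul_id_of_eigenvectors hgp (μ := μ ∘ Fin.castSucc)
    (fun i => by fin_cases i <;> simpa [hb] using hf _) (hf 3)

end

def toHomogeneous {k : Type*} [One k] (x : k × k) : Fin 3 → k := ![x.1, x.2, 1]

theorem AffineIndependent.linearIndependent_toHomogeneous {k ι : Type*} [Ring k] {p : ι → k × k}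
    (hp : AffineIndependent k p) : LinearIndependent k (toHomogeneous ∘ p) := by
  refine linearIndependent_iff'.2 fun s g hg => hp.eq_zero_of_sum_eq_zero ?_ ?_
  · simpa [toHomogeneous] using congrFun hg 2
  · ext
    · simpa [toHomogeneous, Prod.fst_sum] using congrFun hg 0
    · simpa [toHomogeneous, Prod.snd_sum] using congrFun hg 1

theorem linearIndependent_toHomogeneous_of_not_collinear {k : Type*} [Field k] {a b c : k × k}
    (h : ¬ Collinear k {a, b, c}) :
    LinearIndependent k ![toHomogeneous a, toHomogeneous b, toHomogeneous c] := by
  have hcomp :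
      ![toHomogeneous a, toHomogeneous b, toHomogeneous c] = toHomogeneous ∘ ![a, b, c] := by
    ext l : 1
    fin_cases l <;> rfl
  rw [hcomp]
  exact (affineIndependent_iff_not_collinear_set.2 h).linearIndependent_toHomogeneous

theorem homography_unique_from_four_points_general (M M' : Matrix (Fin 3) (Fin 3) ℝ)
    (hM : IsUnit M.det)
    (p q : Fin 4 → ℝ × ℝ) (w w' : Fin 4 → ℝ) (hw : ∀ i, w i ≠ 0) (hw' : ∀ i, w' i ≠ 0)
    (hmap : ∀ i, Matrix.vecMul ![(p i).1, (p i).2, 1] M = w i • ![(q i).1, (q i).2, 1])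
    (hmap' : ∀ i, Matrix.vecMul ![(p i).1, (p i).2, 1] M' = w' i • ![(q i).1, (q i).2, 1])
    (hgen : ∀ i j k : Fin 4, i ≠ j → j ≠ k → i ≠ k →
      ¬ Collinear ℝ ({p i, p j, p k} : Set (ℝ × ℝ))) :
    ∃ lam : ℝ, lam ≠ 0 ∧ M' = lam • M := by
  set μ : Fin 4 → ℝ := fun i => w' i / w i
  have heig : ∀ i, toHomogeneous (p i) ᵥ* (M' * M⁻¹) = μ i • toHomogeneous (p i) := fun i => by
    rw [← vecMul_vecMul, toHomogeneous, hmap', ← div_mul_cancel₀ (w' i) (hw i), ← smul_smul,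
      ← hmap, smul_vecMul, vecMul_vecMul, mul_nonsing_inv _ hM, vecMul_one]
  have hscalar : (M' * M⁻¹).vecMulLinear = μ 3 • LinearMap.id :=
    Module.End.eq_smul_id_of_four_eigenvectors (u := fun i => toHomogeneous (p i)) (by simp)
      (fun i j k hij hjk hik => linearIndependent_toHomogeneous_of_not_collinear
        (hgen i j k hij hjk hik)) heig
  refine ⟨μ 3, div_ne_zero (hw' 3) (hw 3), ext_iff_vecMul.2 fun x => ?_⟩
  calc x ᵥ* M' = x ᵥ* (M' * M⁻¹) ᵥ* M := by
        rw [vecMul_vecMul, Matrix.mul_assoc, nonsing_inv_mul _ hM, Matrix.mul_one]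
    _ = x ᵥ* (μ 3 • M) := by
        rw [show x ᵥ* (M' * M⁻¹) = μ 3 • x from LinearMap.congr_fun hscalar x, smul_vecMul,
          vecMul_smul]

theorem homography_unique_from_four_points (M M' : Matrix (Fin 3) (Fin 3) ℝ)
    (hM : IsUnit M.det) (hM' : IsUnit M'.det)
    (p q : Fin 4 → ℝ × ℝ) (w w' : Fin 4 → ℝ) (hw : ∀ i, w i ≠ 0) (hw' : ∀ i, w' i ≠ 0)
    (hmap : ∀ i, Matrix.vecMul ![(p i).1, (p i).2, 1] M = w i • ![(q i).1, (q i).2, 1])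
    (hmap' : ∀ i, Matrix.vecMul ![(p i).1, (p i).2, 1] M' = w' i • ![(q i).1, (q i).2, 1])
    (hgen : ∀ i j k : Fin 4, i ≠ j → j ≠ k → i ≠ k →
      ¬ Collinear ℝ ({p i, p j, p k} : Set (ℝ × ℝ))) :
    ∃ lam : ℝ, lam ≠ 0 ∧ M' = lam • M :=
  homography_unique_from_four_points_general M M' hM p q w w' hw hw' hmap hmap' hgen
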